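/- Let α and β be algebraic units in ℂ such that [ℚ(α):ℚ] is coprime to [ℚ(β):ℚ] and p := [ℚ(αβ):ℚ] is prime. Then α^p = ±1 or β^p = ±1. -/

import Mathlib

open Polynomial IntermediateField

/-- An algebraic unit: root of a monic integer polynomial with constant term ±1. -/
def IsAlgebraicUnit (α : ℂ) : Prop :=
  ∃ p : Polynomial ℤ, p.Monic ∧ (p.coeff 0 = 1 ∨ p.coeff 0 = -1) ∧ Polynomial.aeval α p = 0

/-- The degree of α over ℚ, i.e. [ℚ(α):ℚ]. -/
noncomputable def degQ (α : ℂ) : ℕ := (minpoly ℚ α).natDegree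

/-!
Write `m = [ℚ(α):ℚ]`, `n = [ℚ(β):ℚ]` and `F = ℚ(β)`. Since `m` and `n` are coprime, `ℚ(α)` and
`ℚ(β)` are linearly disjoint, so `[F(α):F] = m` and `[ℚ(α, β):ℚ] = mn`; as `αβ ∈ ℚ(α, β)`, the prime
`p` divides `m` or `n`, say `m`. Over `F` the minimal polynomial of `αβ` is that of `α` with its
roots scaled by `β`, so it has degree `m ≥ p`; hence both minimal polynomials over `F` come from
`ℚ`, and comparing constant terms gives `c(αβ) = c(α) β^p`, where `c(x)` is the constant term of
the minimal polynomial of `x` over `ℚ`. For algebraic units these are `±1`, so `β^p = ±1`.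
-/

section FieldTower

variable {K E : Type*} [Field K] [Field E] [Algebra K E]

theorem minpoly.natDegree_le_of_isScalarTower {F : Type*} [Field F] [Algebra K F] [Algebra F E]
    [IsScalarTower K F E] {x : E} (hx : IsIntegral K x) :
    (minpoly F x).natDegree ≤ (minpoly K x).natDegree := by
  simpa using natDegree_le_of_dvd (minpoly.dvd_map_of_isScalarTower K F x)
    ((minpoly.monic hx).map (algebraMap K F)).ne_zero

theorem minpoly.map_eq_of_natDegree_le {F : Type*} [Field F] [Algebra K F] [Algebra F E]
    [IsScalarTower K F E] {x : E} (hx : IsIntegral K x)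
    (h : (minpoly K x).natDegree ≤ (minpoly F x).natDegree) :
    (minpoly K x).map (algebraMap K F) = minpoly F x :=
  eq_of_monic_of_dvd_of_natDegree_le (minpoly.monic hx.tower_top) ((minpoly.monic hx).map _)
    (minpoly.dvd_map_of_isScalarTower K F x) (by rwa [natDegree_map])

variable {α β : E}

theorem linearDisjoint_adjoin_simple_of_coprime (hα : IsIntegral K α) (hβ : IsIntegral K β)
    (h : (minpoly K α).natDegree.Coprime (minpoly K β).natDegree) :
    K⟮α⟯.LinearDisjoint K⟮β⟯ :=
  .of_finrank_coprime (by rwa [adjoin.finrank hα, adjoin.finrank hβ])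

theorem natDegree_minpoly_adjoin_simple_of_coprime (hα : IsIntegral K α) (hβ : IsIntegral K β)
    (h : (minpoly K α).natDegree.Coprime (minpoly K β).natDegree) :
    (minpoly K⟮β⟯ α).natDegree = (minpoly K α).natDegree := by
  have := adjoin.finiteDimensional hα
  have hrank :=
    (linearDisjoint_adjoin_simple_of_coprime hα hβ h).adjoin_rank_eq_rank_left_of_isAlgebraic_left
  rw [adjoin_adjoin_right] at hrank
  rw [← adjoin.finrank hα.tower_top, ← adjoin.finrank hα]
  exact congr_arg Cardinal.toNat hrank

theorem natDegree_minpoly_mul_dvd_of_coprime (hα : IsIntegral K α) (hβ : IsIntegral K β)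
    (h : (minpoly K α).natDegree.Coprime (minpoly K β).natDegree) :
    (minpoly K (α * β)).natDegree ∣ (minpoly K α).natDegree * (minpoly K β).natDegree := by
  have := adjoin.finiteDimensional hα
  have := adjoin.finiteDimensional hβ
  have hmem : α * β ∈ K⟮α⟯ ⊔ K⟮β⟯ :=
    mul_mem (le_sup_left (b := K⟮β⟯) (mem_adjoin_simple_self K α))
      (le_sup_right (a := K⟮α⟯) (mem_adjoin_simple_self K β))
  have hdvd := minpoly.degree_dvd (K := K) (x := (⟨α * β, hmem⟩ : ↥(K⟮α⟯ ⊔ K⟮β⟯)))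
    (.of_finite K _)
  rwa [minpoly_eq, (linearDisjoint_adjoin_simple_of_coprime hα hβ h).finrank_sup,
    adjoin.finrank hα, adjoin.finrank hβ] at hdvd

theorem algebraMap_coeff_zero_minpoly_mul_of_coprime (hα : IsIntegral K α) (hβ : IsIntegral K β)
    (h : (minpoly K α).natDegree.Coprime (minpoly K β).natDegree)
    (hdvd : (minpoly K (α * β)).natDegree ∣ (minpoly K α).natDegree) :
    algebraMap K E ((minpoly K (α * β)).coeff 0) =
      algebraMap K E ((minpoly K α).coeff 0) * β ^ (minpoly K (α * β)).natDegree := by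
  rcases eq_or_ne β 0 with rfl | hβ0
  · simp [minpoly.zero]
  set b : K⟮β⟯ := AdjoinSimple.gen K β
  have hb : b ≠ 0 := fun hb ↦ hβ0 (congr_arg Subtype.val hb)
  have hscale : minpoly K⟮β⟯ (α * β) = (minpoly K⟮β⟯ α).scaleRoots b := by
    rw [← IsIntegrallyClosed.minpoly_smul hb hα.tower_top, Algebra.smul_def, mul_comm]
    rfl
  have hdegα := natDegree_minpoly_adjoin_simple_of_coprime hα hβ h
  have hdegαβ : (minpoly K (α * β)).natDegree = (minpoly K⟮β⟯ (α * β)).natDegree := by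
    refine le_antisymm ?_ (minpoly.natDegree_le_of_isScalarTower (hα.mul hβ))
    rw [hscale, natDegree_scaleRoots, hdegα]
    exact Nat.le_of_dvd (minpoly.natDegree_pos hα) hdvd
  have hcoeff := congr_arg (algebraMap K⟮β⟯ E <| coeff · 0) hscale
  rw [coeff_scaleRoots, ← minpoly.map_eq_of_natDegree_le (hα.mul hβ) hdegαβ.le,
    ← minpoly.map_eq_of_natDegree_le hα hdegα.ge, coeff_map, coeff_map, map_mul, map_pow,
    natDegree_map, Nat.sub_zero, ← IsScalarTower.algebraMap_apply,
    ← IsScalarTower.algebraMap_apply] at hcoeff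
  rw [hdegαβ, hscale, natDegree_scaleRoots, hdegα]
  exact hcoeff

end FieldTower

theorem Polynomial.aeval_inv_reverse_eq_zero {R L : Type*} [CommRing R] [Field L] [Algebra R L]
    {f : R[X]} {x : L} (hx : x ≠ 0) (h : aeval x f = 0) : aeval x⁻¹ f.reverse = 0 := by
  let := invertibleOfNonzero hx
  simpa [aeval_def, invOf_eq_inv] using
    (eval₂_reverse_eq_zero_iff (algebraMap R L) x f).mpr (by simpa [aeval_def] using h)

namespace IsAlgebraicUnit

variable {x : ℂ}

theorem isIntegral (h : IsAlgebraicUnit x) : IsIntegral ℤ x :=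
  let ⟨f, hf, _, hfx⟩ := h
  ⟨f, hf, hfx⟩

theorem ne_zero (h : IsAlgebraicUnit x) : x ≠ 0 := by
  rintro rfl
  obtain ⟨f, -, hf0, hfx⟩ := h
  rw [aeval_def, eval₂_at_zero] at hfx
  rcases hf0 with hf0 | hf0 <;> simp [hf0] at hfx

theorem inv (h : IsAlgebraicUnit x) : IsAlgebraicUnit x⁻¹ := by
  obtain ⟨f, hf, hf0, hfx⟩ := h
  have hlead : f.reverse.leadingCoeff = f.coeff 0 := by
    rw [reverse_leadingCoeff, trailingCoeff, natTrailingDegree_eq_zero.mpr (.inr ?_)]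
    rcases hf0 with hf0 | hf0 <;> simp [hf0]
  refine ⟨C (f.coeff 0) * f.reverse, ?_, ?_, ?_⟩
  · rw [Monic, leadingCoeff_mul, leadingCoeff_C, hlead]
    rcases hf0 with hf0 | hf0 <;> simp [hf0]
  · rwa [mul_coeff_zero, coeff_C_zero, coeff_zero_reverse, hf.leadingCoeff, mul_one]
  · rw [map_mul, aeval_inv_reverse_eq_zero (ne_zero ⟨f, hf, hf0, hfx⟩) hfx, mul_zero]

theorem isUnit_coeff_zero_minpoly (h : IsAlgebraicUnit x) : IsUnit ((minpoly ℤ x).coeff 0) := by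
  obtain ⟨f, hf, hf0, hfx⟩ := h
  obtain ⟨q, rfl⟩ := minpoly.isIntegrallyClosed_dvd ⟨f, hf, hfx⟩ hfx
  rw [mul_coeff_zero] at hf0
  exact isUnit_of_mul_isUnit_left (Int.isUnit_iff.mpr hf0)

theorem coeff_zero_minpoly (h : IsAlgebraicUnit x) :
    (minpoly ℚ x).coeff 0 = 1 ∨ (minpoly ℚ x).coeff 0 = -1 := by
  rw [minpoly.isIntegrallyClosed_eq_field_fractions' ℚ h.isIntegral, coeff_map]
  rcases Int.isUnit_iff.mp h.isUnit_coeff_zero_minpoly with h0 | h0 <;> simp [h0]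

end IsAlgebraicUnit

theorem isAlgebraicUnit_iff {x : ℂ} :
    IsAlgebraicUnit x ↔ x ≠ 0 ∧ IsIntegral ℤ x ∧ IsIntegral ℤ x⁻¹ := by
  refine ⟨fun h ↦ ⟨h.ne_zero, h.isIntegral, h.inv.isIntegral⟩, fun ⟨hx, hint, hinv⟩ ↦ ?_⟩
  have hroot : aeval x (minpoly ℤ x⁻¹).reverse = 0 := by
    simpa using aeval_inv_reverse_eq_zero (inv_ne_zero hx) (minpoly.aeval ℤ x⁻¹)
  obtain ⟨q, hq⟩ := minpoly.isIntegrallyClosed_dvd hint hroot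
  have hunit : IsUnit ((minpoly ℤ x).coeff 0) := IsUnit.of_mul_eq_one (q.coeff 0) <| by
    rw [← mul_coeff_zero, ← hq, coeff_zero_reverse, (minpoly.monic hinv).leadingCoeff]
  exact ⟨minpoly ℤ x, minpoly.monic hint, Int.isUnit_iff.mp hunit, minpoly.aeval ℤ x⟩

theorem IsAlgebraicUnit.mul {x y : ℂ} (hx : IsAlgebraicUnit x) (hy : IsAlgebraicUnit y) :
    IsAlgebraicUnit (x * y) := by
  rw [isAlgebraicUnit_iff] at hx hy ⊢
  exact ⟨mul_ne_zero hx.1 hy.1, hx.2.1.mul hy.2.1, by rw [mul_inv]; exact hx.2.2.mul hy.2.2⟩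

theorem IsAlgebraicUnit.pow_degQ_mul_eq_one_or_neg_one {α β : ℂ} (hα : IsAlgebraicUnit α)
    (hβ : IsAlgebraicUnit β) (hco : (degQ α).Coprime (degQ β)) (hdvd : degQ (α * β) ∣ degQ α) :
    β ^ degQ (α * β) = 1 ∨ β ^ degQ (α * β) = -1 := by
  have key := algebraMap_coeff_zero_minpoly_mul_of_coprime hα.isIntegral.tower_top
    hβ.isIntegral.tower_top hco hdvd
  rw [degQ]
  rcases (hα.mul hβ).coeff_zero_minpoly with hαβ | hαβ <;>
    rcases hα.coeff_zero_minpoly with hα' | hα' <;>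
    simp only [hαβ, hα', map_one, map_neg, one_mul, neg_one_mul] at key <;> grind

theorem stmt_3 (α β : ℂ) (hα : IsAlgebraicUnit α) (hβ : IsAlgebraicUnit β)
    (hco : Nat.Coprime (degQ α) (degQ β))
    (hp : Nat.Prime (degQ (α * β))) :
    (α ^ (degQ (α * β)) = 1 ∨ α ^ (degQ (α * β)) = -1) ∨
      (β ^ (degQ (α * β)) = 1 ∨ β ^ (degQ (α * β)) = -1) := by
  rcases hp.dvd_mul.mp (natDegree_minpoly_mul_dvd_of_coprime hα.isIntegral.tower_top
    hβ.isIntegral.tower_top hco) with hdvd | hdvd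
  · exact .inr (hα.pow_degQ_mul_eq_one_or_neg_one hβ hco hdvd)
  · rw [mul_comm] at hdvd ⊢
    exact .inl (hβ.pow_degQ_mul_eq_one_or_neg_one hα hco.symm hdvd)
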